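/- arXiv:2210.12729 — 6 statements merged into one kernel-verified Lean document; each statement's English description precedes it below -/
import Mathlib

section
/- Let K be a field and let A and B be valuation subrings of K each of which is a discrete valuation ring (IsDiscreteValuationRing). If A and B are dependent, i.e., the subring of K generated by A ∪ B is a proper subring of K, then A = B. -/
namespace ValuationSubring

variable {K : Type*} [Field K]

theorem eq_of_closure_union_ne_top (A B : ValuationSubring K)
    [Ring.KrullDimLE 1 A] [Ring.KrullDimLE 1 B]
    (h : Subring.closure ((A : Set K) ∪ (B : Set K)) ≠ ⊤) : A = B := by
  let C := A.ofLE (Subring.closure ((A : Set K) ∪ (B : Set K)))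
    (Set.subset_union_left.trans Subring.subset_closure)
  have hC : C ≠ ⊤ := fun hC => h (congrArg toSubring hC)
  have hAC : A ≤ C := Set.subset_union_left.trans Subring.subset_closure
  have hBC : B ≤ C := Set.subset_union_right.trans Subring.subset_closure
  exact (eq_of_le_of_ne_top A hAC hC).trans (eq_of_le_of_ne_top B hBC hC).symm

end ValuationSubring

/-- Lemma 3.5: two dependent discrete valuations on a field coincide.  Here `A` and `B` are
valuation subrings of `K` which are discrete valuation rings, and dependence means that the
subring of `K` generated by `A ∪ B` is a proper subring of `K`. -/
theorem dependent_discrete_valuations_eq (K : Type*) [Field K]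
    (A B : ValuationSubring K)
    [IsDiscreteValuationRing A] [IsDiscreteValuationRing B]
    (h : Subring.closure ((A : Set K) ∪ (B : Set K)) ≠ ⊤) :
    A = B :=
  A.eq_of_closure_union_ne_top B h
end

section
/- Let Γ be a nontrivial linearly ordered additive abelian group and k a field. Then for every countable subfield F of the Hahn series field HahnSeries Γ k, the set of elements of HahnSeries Γ k that are transcendental over F has cardinality at least 2^ℵ₀ (the continuum); in particular, there are uncountably many elements of HahnSeries Γ k transcendental over F. -/
/-!
The Hahn series field has at least continuum many elements: a positive `g : Γ` gives an order
embedding `n ↦ n • g` of `ℕ` into `Γ`, and every subset of `ℕ` becomes a Hahn series supported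
on its image. Over a countable field only countably many elements are algebraic, since each of
the countably many nonzero polynomials has finitely many roots; so removing them leaves a set
of the same cardinality.
-/

open Cardinal

theorem continuum_le_cardinalMk_transcendental (R A : Type*) [CommRing R] [IsDomain R]
    [Countable R] [CommRing A] [IsDomain A] [Algebra R A] [Module.IsTorsionFree R A]
    (hA : 𝔠 ≤ #A) : 𝔠 ≤ #{x : A // Transcendental R x} := by
  have : Infinite A := infinite_iff.mpr (aleph0_le_continuum.trans hA)
  have h_alg : #{x : A | IsAlgebraic R x} < #A :=
    (Algebraic.countable R A).le_aleph0.trans_lt (aleph0_lt_continuum.trans_le hA)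
  calc 𝔠 ≤ #A := hA
    _ = #({x : A | IsAlgebraic R x}ᶜ : Set A) := (mk_compl_of_infinite _ h_alg).symm
    _ = #{x : A // Transcendental R x} := rfl

namespace HahnSeries

variable {Γ R : Type*} [PartialOrder Γ] [Zero R] [Nontrivial R]

theorem continuum_le_cardinalMk (e : ℕ ↪o Γ) : 𝔠 ≤ #(HahnSeries Γ R) := by
  obtain ⟨a, ha⟩ := exists_ne (0 : R)
  let ofSet : Set ℕ → HahnSeries Γ R := fun s =>
    embDomain e ⟨s.indicator fun _ => a, Set.isPWO_of_wellQuasiOrderedLE _⟩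
  have h_inj : Function.Injective ofSet := by
    intro s t hst
    ext n
    have h_coeff := congrArg (fun x => x.coeff (e n)) hst
    simp only [ofSet, embDomain_coeff] at h_coeff
    by_cases hs : n ∈ s <;> by_cases ht : n ∈ t <;> simp_all
  simpa using lift_mk_le'.mpr ⟨⟨ofSet, h_inj⟩⟩

end HahnSeries

/-- Property (3) of Assumption (⊗) (Lemma 4.1): if `Γ` is a nontrivial linearly ordered
abelian group and `k` a field, then for every countable subfield `F` of the Hahn series
field `HahnSeries Γ k` there are at least continuum many elements of `HahnSeries Γ k`
transcendental over `F`. -/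
theorem hahnSeries_transcendental_continuum (Γ : Type*) [AddCommGroup Γ]
    [LinearOrder Γ] [IsOrderedAddMonoid Γ]
    [Nontrivial Γ] (k : Type*) [Field k]
    (F : Subfield (HahnSeries Γ k)) (hF : Countable F) :
    Cardinal.continuum ≤ Cardinal.mk {x : HahnSeries Γ k // Transcendental F x} := by
  obtain ⟨g, hg⟩ := exists_zero_lt (α := Γ)
  exact continuum_le_cardinalMk_transcendental F _
    (HahnSeries.continuum_le_cardinalMk (OrderEmbedding.ofStrictMono _ (nsmul_left_strictMono hg)))
end

section
/- Let Γ be a nontrivial linearly ordered additive abelian group and k a field. Then the cardinality of the Hahn series field HahnSeries Γ k is at least 2^ℵ₀ (the continuum). -/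
/-!
A positive element `g` of `Γ` gives an order embedding `n ↦ n • g` of `ℕ` into `Γ`, along which
every Hahn series over `ℕ` extends to one over `Γ`. Since `ℕ` is well ordered, every function
`ℕ → k` is the coefficient function of a Hahn series over `ℕ`, and there are `#k ^ ℵ₀ ≥ 2 ^ ℵ₀`
of them.
-/

open Cardinal

universe u v w

namespace HahnSeries

variable {Γ : Type u} {R : Type v} [Zero R]

theorem lift_mk_le_lift_mk_of_orderEmbedding {Γ' : Type w} [PartialOrder Γ] [PartialOrder Γ']
    (f : Γ ↪o Γ') :
    lift.{max v w} #(HahnSeries Γ R) ≤ lift.{max u v} #(HahnSeries Γ' R) :=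
  lift_mk_le'.2 ⟨⟨embDomain f, embDomain_injective⟩⟩

theorem mk_arrow_le_mk [PartialOrder Γ] [WellQuasiOrderedLE Γ] : #(Γ → R) ≤ #(HahnSeries Γ R) :=
  mk_le_of_injective (α := Γ → R) (f := fun c ↦ ⟨c, Set.isPWO_of_wellQuasiOrderedLE _⟩)
    fun _ _ h ↦ congrArg coeff h

end HahnSeries

theorem Cardinal.continuum_le_mk_nat_arrow (R : Type*) [Nontrivial R] : 𝔠 ≤ #(ℕ → R) := by
  rw [mk_arrow, mk_nat, lift_aleph0, lift_uzero, ← two_power_aleph0]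
  exact power_le_power_right (two_le_iff_one_lt.2 (one_lt_iff_nontrivial.2 ‹_›))

/-- A cardinality estimate from Lemma 4.1: if `Γ` is a nontrivial linearly ordered abelian
group and `k` a field, the Hahn series field `HahnSeries Γ k` has cardinality at least the
continuum. -/
theorem hahnSeries_card_continuum (Γ : Type*) [AddCommGroup Γ] [LinearOrder Γ]
    [IsOrderedAddMonoid Γ]
    [Nontrivial Γ] (k : Type*) [Field k] :
    Cardinal.continuum ≤ Cardinal.mk (HahnSeries Γ k) := by
  obtain ⟨g, hg⟩ := exists_zero_lt (α := Γ)
  calc 𝔠 = lift 𝔠 := lift_continuum.symm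
    _ ≤ lift #(ℕ → k) := lift_le.2 (continuum_le_mk_nat_arrow k)
    _ ≤ lift #(HahnSeries ℕ k) := lift_le.2 HahnSeries.mk_arrow_le_mk
    _ ≤ lift #(HahnSeries Γ k) := HahnSeries.lift_mk_le_lift_mk_of_orderEmbedding
      (OrderEmbedding.ofStrictMono _ (nsmul_left_strictMono hg))
    _ = #(HahnSeries Γ k) := lift_id' _
end

section
/- Let Γ be a linearly ordered additive abelian group, k a field, and q a prime number with (q : k) ≠ 0. Let F₀ be the subfield of the Hahn series field HahnSeries Γ k generated by the constant series C c for c ∈ k together with the monomials single γ 1 for γ ∈ Γ. Then for every nonzero a ∈ HahnSeries Γ k there exist a nonzero b ∈ F₀ and an element c ∈ HahnSeries Γ k such that a = b · c^q. -/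
/-!
Write `a = single (order a) (leadingCoeff a) * u` with `u - 1` of positive order; the monomial
lies in `k(Γ)`, so it remains to take a `q`-th root of `u`. Since `k⟦X⟧` is `X`-adically complete
it is Henselian, and `(q : k) ≠ 0` makes `1` a simple root of `Y ^ q - (1 + X)` modulo `X`, so
`1 + X` has a `q`-th root `f`; substituting `u - 1` for `X` in `f` gives a `q`-th root of `u`.
-/

open Polynomial in
theorem HenselianRing.exists_pow_eq_of_sub_one_mem {R : Type*} [CommRing R] {I : Ideal R}
    [HenselianRing R I] {n : ℕ} (hn : IsUnit (n : R)) {x : R} (hx : x - 1 ∈ I) :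
    ∃ y : R, y ^ n = x := by
  rcases Nat.eq_zero_or_pos n with rfl | hn0
  · have : Subsingleton R := subsingleton_of_zero_eq_one (by simpa using hn)
    exact ⟨0, Subsingleton.elim _ _⟩
  have hroot : (X ^ n - C x).eval 1 ∈ I := by
    rw [eval_sub, eval_pow, eval_X, one_pow, eval_C, ← neg_sub]
    exact I.neg_mem_iff.mpr hx
  have hsimple : (X ^ n - C x).derivative.eval 1 = (n : R) := by
    simp [derivative_X_pow]
  obtain ⟨y, hy, -⟩ := HenselianRing.is_henselian (X ^ n - C x)
    (monic_X_pow_sub_C x hn0.ne') 1 hroot (hsimple ▸ hn.map (Ideal.Quotient.mk I))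
  exact ⟨y, by simpa [sub_eq_zero] using hy⟩

theorem PowerSeries.exists_pow_eq_one_add_X {R : Type*} [CommRing R] {n : ℕ}
    (hn : IsUnit (n : R)) : ∃ f : PowerSeries R, f ^ n = 1 + X :=
  HenselianRing.exists_pow_eq_of_sub_one_mem (I := .span {X})
    (by simpa using hn.map (C (R := R))) (by simp)

namespace HahnSeries

variable {Γ : Type*} {R : Type*} [CommRing R]

theorem exists_pow_eq_of_orderTop_sub_one_pos [AddCommMonoid Γ] [LinearOrder Γ]
    [IsOrderedCancelAddMonoid Γ] {n : ℕ} (hn : IsUnit (n : R)) {x : HahnSeries Γ R}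
    (hx : 0 < (x - 1).orderTop) : ∃ y : HahnSeries Γ R, y ^ n = x := by
  obtain ⟨f, hf⟩ := PowerSeries.exists_pow_eq_one_add_X hn
  refine ⟨PowerSeries.heval (x - 1) f, ?_⟩
  rw [← map_pow, hf, map_add, map_one, PowerSeries.heval_X _ hx, add_sub_cancel]

theorem exists_eq_single_order_leadingCoeff_mul [AddCommGroup Γ] [LinearOrder Γ]
    [IsOrderedAddMonoid Γ] {x : HahnSeries Γ R} (hx : IsUnit x.leadingCoeff) :
    ∃ u : HahnSeries Γ R, 0 < (u - 1).orderTop ∧ x = single x.order x.leadingCoeff * u := by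
  refine ⟨single (-x.order) (↑hx.unit⁻¹ : R) * x, ?_, ?_⟩
  · rw [← orderTop_neg, neg_sub]
    exact unit_aux x hx.val_inv_mul _ (neg_add_cancel _)
  · rw [← mul_assoc, single_mul_single, add_neg_cancel, hx.mul_val_inv, single_zero_one, one_mul]

end HahnSeries

theorem hahnSeries_qth_power_decomposition_general (Γ : Type*) [AddCommGroup Γ] [LinearOrder Γ] [IsOrderedAddMonoid Γ]
    (k : Type*) [Field k] (q : ℕ) (hk : (q : k) ≠ 0) :
    ∀ a : HahnSeries Γ k, a ≠ 0 →
      ∃ b ∈ Subfield.closure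
          (Set.range (HahnSeries.C : k →+* HahnSeries Γ k) ∪
            Set.range fun γ : Γ => (HahnSeries.single γ 1 : HahnSeries Γ k)),
        b ≠ 0 ∧ ∃ c : HahnSeries Γ k, a = b * c ^ q := by
  intro a ha
  have hlead : a.leadingCoeff ≠ 0 := HahnSeries.leadingCoeff_ne_zero.mpr ha
  obtain ⟨u, hu, hau⟩ := HahnSeries.exists_eq_single_order_leadingCoeff_mul hlead.isUnit
  obtain ⟨c, rfl⟩ := HahnSeries.exists_pow_eq_of_orderTop_sub_one_pos hk.isUnit hu
  have hmonomial : HahnSeries.single a.order a.leadingCoeff =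
      HahnSeries.C a.leadingCoeff * HahnSeries.single a.order 1 := by
    rw [HahnSeries.C_apply, HahnSeries.single_mul_single, zero_add, mul_one]
  refine ⟨_, ?_, HahnSeries.single_ne_zero hlead, c, hau⟩
  rw [hmonomial]
  exact Subfield.mul_mem _ (Subfield.subset_closure (.inl ⟨_, rfl⟩))
    (Subfield.subset_closure (.inr ⟨_, rfl⟩))

/-- Property (5) of Assumption (⊗) (Lemma 4.1, adapting Ziegler's Lemma 3): if `q` is a
prime with `(q : k) ≠ 0`, then every nonzero Hahn series over `k` is the product of a
nonzero element of the subfield `k(Γ)` (generated by the constants and the monomials) and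
a `q`-th power. -/
theorem hahnSeries_qth_power_decomposition (Γ : Type*) [AddCommGroup Γ] [LinearOrder Γ] [IsOrderedAddMonoid Γ]
    (k : Type*) [Field k] (q : ℕ) (hq : q.Prime) (hk : (q : k) ≠ 0) :
    ∀ a : HahnSeries Γ k, a ≠ 0 →
      ∃ b ∈ Subfield.closure
          (Set.range (HahnSeries.C : k →+* HahnSeries Γ k) ∪
            Set.range fun γ : Γ => (HahnSeries.single γ 1 : HahnSeries Γ k)),
        b ≠ 0 ∧ ∃ c : HahnSeries Γ k, a = b * c ^ q :=
  hahnSeries_qth_power_decomposition_general Γ k q hk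
end

section
/- Let E be a field, R a subfield of E, and let A and B be valuation subrings of E with associated valuations u and v respectively. Suppose: (i) A ≠ E (u is nontrivial) and every nonzero element of R is a unit of A (u is trivial on R); (ii) B ≠ E (v is nontrivial) and v attains every one of its values on R, i.e., for every nonzero x ∈ E there exists a nonzero r ∈ R with v(r) = v(x). Then A and B are independent: the subring of E generated by A ∪ B is all of E. -/
namespace ValuationSubring

variable {E : Type*} [Field E]

theorem closure_union_eq_top_of_forall_exists_valuation_eq (A B : ValuationSubring E)
    (h : ∀ x : E, x ≠ 0 → ∃ a ∈ A, B.valuation a = B.valuation x) :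
    Subring.closure ((A : Set E) ∪ (B : Set E)) = ⊤ := by
  rw [_root_.eq_top_iff]
  rintro x -
  rcases eq_or_ne x 0 with rfl | hx
  · exact Subring.zero_mem _
  obtain ⟨a, haA, hva⟩ := h x hx
  obtain ⟨b, rfl⟩ := (B.valuation_eq_iff x a).mp hva.symm
  exact Subring.mul_mem _ (Subring.subset_closure (Or.inr b.1.2))
    (Subring.subset_closure (Or.inl haA))

end ValuationSubring

theorem valuation_subrings_independent_general (E : Type*) [Field E] (R : Subfield E)
    (A B : ValuationSubring E)
    (hAR : ∀ r : E, r ∈ R → r ≠ 0 → A.valuation r = 1)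
    (hBR : ∀ x : E, x ≠ 0 → ∃ r : E, r ∈ R ∧ r ≠ 0 ∧ B.valuation r = B.valuation x) :
    Subring.closure ((A : Set E) ∪ (B : Set E)) = ⊤ := by
  refine A.closure_union_eq_top_of_forall_exists_valuation_eq B fun x hx => ?_
  obtain ⟨r, hrR, hr0, hvr⟩ := hBR x hx
  exact ⟨r, A.mem_of_valuation_le_one r (hAR r hrR hr0).le, hvr⟩

/-- Lemma 4.3 (in the generality established by its proof): let `E` be a field, `R` a
subfield, and `A`, `B` valuation subrings of `E` with valuations `u = A.valuation` and
`v = B.valuation`.  If `u` is nontrivial and trivial on `R`, while `v` is nontrivial and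
attains all of its values on `R`, then `A` and `B` are independent, i.e. the subring
generated by `A ∪ B` is all of `E`. -/
theorem valuation_subrings_independent (E : Type*) [Field E] (R : Subfield E)
    (A B : ValuationSubring E)
    (hA : (A : Set E) ≠ Set.univ)
    (hAR : ∀ r : E, r ∈ R → r ≠ 0 → A.valuation r = 1)
    (hB : (B : Set E) ≠ Set.univ)
    (hBR : ∀ x : E, x ≠ 0 → ∃ r : E, r ∈ R ∧ r ≠ 0 ∧ B.valuation r = B.valuation x) :
    Subring.closure ((A : Set E) ∪ (B : Set E)) = ⊤ :=
  valuation_subrings_independent_general E R A B hAR hBR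
end

section
/- Let Z be a field, 𝒪 a valuation subring of Z which is henselian as a local ring (HenselianLocalRing), K a subfield of Z, and q a prime number. Assume that for every α ∈ Z that is algebraic over K, either α ∈ K or q divides the degree [K(α) : K] of the intermediate field generated by α over K. Then for every natural number n with 2 ≤ n < q and all elements a₀, a₁, …, a_{n−2} of K lying in the maximal ideal of 𝒪, the polynomial Xⁿ + Xⁿ⁻¹ + a_{n−2}Xⁿ⁻² + ⋯ + a₁X + a₀ has a root in K. -/
/-! Modulo the maximal ideal of `𝒪` the polynomial becomes `Xⁿ⁻¹(X + 1)`, which has the simple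
root `-1`, so by henselianity it has a root `x ∈ 𝒪`. As `x` has degree at most `n < q` over `K`,
the degree hypothesis forces `x ∈ K`. -/

open IntermediateField Polynomial IsLocalRing

namespace Polynomial

variable {R S : Type*} [CommRing R] [CommRing S]

/-- The polynomial of the henselianity axiom `φₙ`. -/
noncomputable def phiPoly (n : ℕ) (c : Fin (n - 1) → R) : R[X] :=
  X ^ n + X ^ (n - 1) + ∑ i : Fin (n - 1), C (c i) * X ^ (i : ℕ)

@[simp]
theorem eval_phiPoly (n : ℕ) (c : Fin (n - 1) → R) (x : R) :
    (phiPoly n c).eval x = x ^ n + x ^ (n - 1) + ∑ i : Fin (n - 1), c i * x ^ (i : ℕ) := by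
  simp [phiPoly, eval_finsetSum]

theorem map_phiPoly (f : R →+* S) (n : ℕ) (c : Fin (n - 1) → R) :
    (phiPoly n c).map f = phiPoly n (f ∘ c) := by
  simp [phiPoly, Polynomial.map_sum]

theorem degree_X_pow_sub_one_add_sum_lt [Nontrivial R] {n : ℕ} (hn : 1 ≤ n)
    (c : Fin (n - 1) → R) :
    (X ^ (n - 1) + ∑ i : Fin (n - 1), C (c i) * X ^ (i : ℕ)).degree < n := by
  refine (degree_add_le _ _).trans_lt (max_lt ?_ ((degree_sum_fin_lt c).trans_le ?_))
  · rw [degree_X_pow]; exact_mod_cast Nat.sub_lt hn one_pos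
  · exact_mod_cast Nat.sub_le n 1

theorem monic_phiPoly [Nontrivial R] {n : ℕ} (hn : 1 ≤ n) (c : Fin (n - 1) → R) :
    (phiPoly n c).Monic := by
  rw [phiPoly, add_assoc]
  exact monic_X_pow_add (degree_X_pow_sub_one_add_sum_lt hn c)

theorem natDegree_phiPoly [Nontrivial R] {n : ℕ} (hn : 1 ≤ n) (c : Fin (n - 1) → R) :
    (phiPoly n c).natDegree = n := by
  rw [phiPoly, add_assoc, natDegree_add_eq_left_of_degree_lt, natDegree_X_pow]
  rw [degree_X_pow]
  exact degree_X_pow_sub_one_add_sum_lt hn c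

theorem map_residue_phiPoly [IsLocalRing R] {n : ℕ} (hn : 1 ≤ n) {c : Fin (n - 1) → R}
    (hc : ∀ i, c i ∈ maximalIdeal R) :
    (phiPoly n c).map (residue R) = X ^ (n - 1) * (X - C (-1)) := by
  have hc0 (i) : residue R (c i) = 0 := (residue_eq_zero_iff _).mpr (hc i)
  obtain ⟨m, rfl⟩ := Nat.exists_eq_add_of_le' hn
  rw [map_phiPoly]
  simp [phiPoly, hc0, pow_succ, mul_add]

end Polynomial

theorem HenselianLocalRing.exists_isRoot_of_map_residue_eq_mul_X_sub_C {R : Type*} [CommRing R]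
    [HenselianLocalRing R] {f : R[X]} (hf : f.Monic) {g : (ResidueField R)[X]}
    {a₀ : ResidueField R} (hfg : f.map (residue R) = g * (X - C a₀)) (hg : g.eval a₀ ≠ 0) :
    ∃ a, f.IsRoot a ∧ residue R a = a₀ := by
  have H := ((HenselianLocalRing.TFAE R).out 0 1).mp ‹_›
  refine H f hf a₀ ?_ ?_
  · rw [← eval_map_algebraMap, ResidueField.algebraMap_eq, hfg]; simp
  · rw [← eval_map_algebraMap, ResidueField.algebraMap_eq, ← derivative_map, hfg]; simpa

theorem IntermediateField.not_dvd_finrank_adjoin_simple {K L : Type*} [Field K] [Field L]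
    [Algebra K L] {x : L} {g : K[X]} (hg : g ≠ 0) (hgx : aeval x g = 0) {q : ℕ}
    (hq : g.natDegree < q) : ¬ q ∣ Module.finrank K K⟮x⟯ := by
  have hx : IsIntegral K x := IsAlgebraic.isIntegral ⟨g, hg, hgx⟩
  rw [adjoin.finrank hx]
  intro hdvd
  have hle := natDegree_le_of_dvd (minpoly.dvd K x hgx) hg
  have := Nat.le_of_dvd (minpoly.natDegree_pos hx) hdvd
  omega

theorem HenselianLocalRing.exists_isRoot_phiPoly {R : Type*} [CommRing R] [HenselianLocalRing R]
    {n : ℕ} (hn : 1 ≤ n) {c : Fin (n - 1) → R} (hc : ∀ i, c i ∈ maximalIdeal R) :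
    ∃ a, (phiPoly n c).IsRoot a :=
  (exists_isRoot_of_map_residue_eq_mul_X_sub_C (monic_phiPoly hn c) (map_residue_phiPoly hn hc)
    (by simp)).imp fun _ => And.left

theorem henselian_axioms_of_degree_divisibility_general (Z : Type*) [Field Z]
    (𝒪 : ValuationSubring Z) [HenselianLocalRing 𝒪]
    (K : Subfield Z) (q : ℕ)
    (halg : ∀ α : Z, IsAlgebraic K α →
      α ∈ K ∨ q ∣ Module.finrank K (IntermediateField.adjoin K {α}))
    (n : ℕ) (h2 : 2 ≤ n) (hnq : n < q)
    (a : Fin (n - 1) → Z) (haK : ∀ i, a i ∈ K)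
    (ham : ∀ i, ∃ y : 𝒪, (y : Z) = a i ∧ y ∈ IsLocalRing.maximalIdeal 𝒪) :
    ∃ x ∈ K, x ^ n + x ^ (n - 1) + ∑ i : Fin (n - 1), a i * x ^ (i : ℕ) = 0 := by
  choose b hb hbm using ham
  obtain ⟨r, hr⟩ := HenselianLocalRing.exists_isRoot_phiPoly (by omega) hbm
  let aK : Fin (n - 1) → K := fun i => ⟨a i, haK i⟩
  have hmap𝒪 : (phiPoly n b).map (algebraMap 𝒪 Z) = phiPoly n a := by
    rw [map_phiPoly]; congr; exact funext hb
  have hroot : (phiPoly n a).IsRoot (r : Z) := hmap𝒪 ▸ hr.map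
  have hrootK : aeval (r : Z) (phiPoly n aK) = 0 := by
    rw [← eval_map_algebraMap, map_phiPoly]; exact hroot
  refine ⟨r, ?_, by simpa using hroot⟩
  have hne : phiPoly n aK ≠ 0 := (monic_phiPoly (by omega) aK).ne_zero
  refine (halg r ⟨_, hne, hrootK⟩).resolve_right (not_dvd_finrank_adjoin_simple hne hrootK ?_)
  rwa [natDegree_phiPoly (by omega)]

/-- Verification of the henselianity axioms `φ_l` for the fields `K_q` (from the proofs of
Corollary 4.10, Theorem 5.3 and Theorem 5.8): if `𝒪` is a henselian valuation subring of a
field `Z`, `K` is a subfield of `Z` such that every element of `Z` algebraic over `K`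
either lies in `K` or generates an extension of degree divisible by the prime `q`, then
for every `n` with `2 ≤ n < q` and all `a₀, …, a_{n-2} ∈ K` lying in the maximal ideal of
`𝒪`, the polynomial `Xⁿ + Xⁿ⁻¹ + a_{n-2}Xⁿ⁻² + ⋯ + a₀` has a root in `K`. -/
theorem henselian_axioms_of_degree_divisibility (Z : Type*) [Field Z]
    (𝒪 : ValuationSubring Z) [HenselianLocalRing 𝒪]
    (K : Subfield Z) (q : ℕ) (hq : q.Prime)
    (halg : ∀ α : Z, IsAlgebraic K α →
      α ∈ K ∨ q ∣ Module.finrank K (IntermediateField.adjoin K {α}))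
    (n : ℕ) (h2 : 2 ≤ n) (hnq : n < q)
    (a : Fin (n - 1) → Z) (haK : ∀ i, a i ∈ K)
    (ham : ∀ i, ∃ y : 𝒪, (y : Z) = a i ∧ y ∈ IsLocalRing.maximalIdeal 𝒪) :
    ∃ x ∈ K, x ^ n + x ^ (n - 1) + ∑ i : Fin (n - 1), a i * x ^ (i : ℕ) = 0 :=
  henselian_axioms_of_degree_divisibility_general Z 𝒪 K q halg n h2 hnq a haK ham
end
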